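/- Let P be a nonempty finite poset on ground set K with m(P) minimal elements, and set d'(P) = max{ d(P|_A) : A a proper subset of K }. Then for every natural number m, 0 ≤ d(P)^m − e(m,P) ≤ 2^{m(P)−1} · d'(P)^m. Moreover, if #K = k then d'(P) ≤ 2^{k−1}, so d(P)^m − e(m,P) ≤ 2^{(k−1)(m+1)}. -/

import Mathlib

open scoped Classical

variable {α : Type*} [DecidableEq α]

/-- `q` is a partial order relation with ground set `S`: it is a set of pairs
contained in `S × S`, reflexive on `S`, transitive and antisymmetric. -/
def IsPOon (S : Finset α) (q : Finset (α × α)) : Prop :=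
  q ⊆ S ×ˢ S ∧ (∀ x ∈ S, (x, x) ∈ q) ∧
  (∀ x y z : α, (x, y) ∈ q → (y, z) ∈ q → (x, z) ∈ q) ∧
  (∀ x y : α, (x, y) ∈ q → (y, x) ∈ q → x = y)

/-- The relation induced on a subset `A` of the ground set. -/
def restrictRel (q : Finset (α × α)) (A : Finset α) : Finset (α × α) :=
  q.filter fun r => r.1 ∈ A ∧ r.2 ∈ A

/-- The downsets of the poset `(S, q)`. -/
noncomputable def downsets (S : Finset α) (q : Finset (α × α)) : Finset (Finset α) :=
  S.powerset.filter fun D => ∀ y ∈ D, ∀ x : α, (x, y) ∈ q → x ∈ D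

/-- `d(P)`, the number of downsets of the poset `(S, q)`. -/
noncomputable def dnum (S : Finset α) (q : Finset (α × α)) : ℕ :=
  (downsets S q).card

/-- The upsets of the poset `(S, q)`. -/
noncomputable def upsets (S : Finset α) (q : Finset (α × α)) : Finset (Finset α) :=
  S.powerset.filter fun U => ∀ x ∈ U, ∀ y : α, (x, y) ∈ q → y ∈ U

/-- Down-closure `QA = {x : x ≤_Q a for some a ∈ A}`. -/
def dcl (q : Finset (α × α)) (A : Finset α) : Finset α :=
  (q.filter fun r => r.2 ∈ A).image Prod.fst

/-- Up-closure `AQ = {y : a ≤_Q y for some a ∈ A}`. -/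
def ucl (q : Finset (α × α)) (A : Finset α) : Finset α :=
  (q.filter fun r => r.1 ∈ A).image Prod.snd

/-- The set of minimal elements of the poset `(S, q)`. -/
noncomputable def minset (S : Finset α) (q : Finset (α × α)) : Finset α :=
  S.filter fun x => ∀ y : α, (y, x) ∈ q → y = x

/-- `E(M, P)`: the partial orders on `M ∪ K` inducing `p` on `K` whose set of
minimal elements is exactly `M`. -/
noncomputable def extPOs (M K : Finset α) (p : Finset (α × α)) :
    Finset (Finset (α × α)) :=
  ((M ∪ K) ×ˢ (M ∪ K)).powerset.filter fun q =>
    IsPOon (M ∪ K) q ∧ restrictRel q K = p ∧ minset (M ∪ K) q = M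

/-- `A` is an antichain of the poset `(S, q)`. -/
def isAntichain (S : Finset α) (q : Finset (α × α)) (A : Finset α) : Prop :=
  A ⊆ S ∧ ∀ x ∈ A, ∀ y ∈ A, (x, y) ∈ q → x = y

/-- The posets `(S, q)` and `(T, r)` are order-isomorphic. -/
def POIso {β : Type*} (S : Finset α) (q : Finset (α × α))
    (T : Finset β) (r : Finset (β × β)) : Prop :=
  ∃ f : α → β, Set.BijOn f ↑S ↑T ∧ ∀ x ∈ S, ∀ y ∈ S, ((x, y) ∈ q ↔ (f x, f y) ∈ r)

/-- `C` is a chain of the poset `(S, q)`. -/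
def isChainOn (S : Finset α) (q : Finset (α × α)) (C : Finset α) : Prop :=
  C ⊆ S ∧ ∀ x ∈ C, ∀ y ∈ C, (x, y) ∈ q ∨ (y, x) ∈ q

/-- The height of the poset `(S, q)`: the maximal size of a chain. -/
noncomputable def heightP (S : Finset α) (q : Finset (α × α)) : ℕ :=
  (S.powerset.filter (isChainOn S q)).sup Finset.card

/-!
A partial order `Q ∈ E(M, P)` is determined by `P` together with, for each `a ∈ M`, the trace on
`K` of the up-set of `a`, which is an up-set of `P`. Conversely a tuple of up-sets of `P` indexed by
`M` comes from an order in `E(M, P)` exactly when every minimal element of `P` lies in one of them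
(otherwise it would stay minimal). So `e(m, P)` counts the covering tuples among the `d(P)^m`
tuples of up-sets, and a union bound over the minimal elements `y` controls the rest: the up-sets
avoiding `y` are the up-sets of `P|_{K \ {y}}`, of which there are at most `d'(P)`.
-/

open Finset

set_option linter.unusedSectionVars false

lemma Nat.le_two_pow_sub_one (n : ℕ) : n ≤ 2 ^ (n - 1) := by
  cases n with
  | zero => exact Nat.zero_le _
  | succ n => exact Nat.lt_two_pow_self

section Downsets

variable {S : Finset α} {q : Finset (α × α)}

lemma mem_downsets {D : Finset α} :
    D ∈ downsets S q ↔ D ⊆ S ∧ ∀ y ∈ D, ∀ x, (x, y) ∈ q → x ∈ D := by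
  simp [downsets]

lemma mem_upsets {U : Finset α} :
    U ∈ upsets S q ↔ U ⊆ S ∧ ∀ x ∈ U, ∀ y, (x, y) ∈ q → y ∈ U := by
  simp [upsets]

lemma mem_minset {x : α} : x ∈ minset S q ↔ x ∈ S ∧ ∀ y, (y, x) ∈ q → y = x := by
  simp [minset]

lemma restrictRel_subset_product (q : Finset (α × α)) (A : Finset α) :
    restrictRel q A ⊆ A ×ˢ A := fun _ hr => mem_product.mpr (mem_filter.mp hr).2

lemma card_upsets (hq : q ⊆ S ×ˢ S) : #(upsets S q) = dnum S q := by
  refine card_nbij' (S \ ·) (S \ ·) (fun U hU => ?_) (fun D hD => ?_)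
    (fun U hU => Finset.sdiff_sdiff_eq_self (mem_upsets.mp hU).1)
    (fun D hD => Finset.sdiff_sdiff_eq_self (mem_downsets.mp hD).1)
  · obtain ⟨-, hUup⟩ := mem_upsets.mp hU
    refine mem_downsets.mpr ⟨sdiff_subset, fun y hy x hxy => ?_⟩
    rw [mem_sdiff] at hy ⊢
    exact ⟨(mem_product.mp (hq hxy)).1, fun hx => hy.2 (hUup x hx y hxy)⟩
  · obtain ⟨-, hDdown⟩ := mem_downsets.mp hD
    refine mem_upsets.mpr ⟨sdiff_subset, fun x hx y hxy => ?_⟩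
    rw [mem_sdiff] at hx ⊢
    exact ⟨(mem_product.mp (hq hxy)).2, fun hy => hx.2 (hDdown y hy x hxy)⟩

lemma dnum_le_two_pow_card (S : Finset α) (q : Finset (α × α)) : dnum S q ≤ 2 ^ #S :=
  (card_filter_le _ _).trans (card_powerset S).le

lemma filter_not_mem_upsets_subset (y : α) :
    (upsets S q).filter (y ∉ ·) ⊆ upsets (S.erase y) (restrictRel q (S.erase y)) := by
  intro U hU
  obtain ⟨hU, hyU⟩ := mem_filter.mp hU
  obtain ⟨hUS, hUup⟩ := mem_upsets.mp hU
  refine mem_upsets.mpr ⟨fun x hx => mem_erase.mpr ⟨?_, hUS hx⟩,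
    fun x hx z hxz => hUup x hx z (mem_filter.mp hxz).1⟩
  rintro rfl
  exact hyU hx

/-- `d'(P)` in the paper's notation. -/
noncomputable def dnumProper (S : Finset α) (q : Finset (α × α)) : ℕ :=
  (S.powerset.erase S).sup fun A => dnum A (restrictRel q A)

lemma card_filter_not_mem_upsets_le {y : α} (hy : y ∈ S) :
    #((upsets S q).filter (y ∉ ·)) ≤ dnumProper S q :=
  calc #((upsets S q).filter (y ∉ ·))
      ≤ #(upsets (S.erase y) (restrictRel q (S.erase y))) :=
        card_le_card (filter_not_mem_upsets_subset y)
    _ = dnum (S.erase y) (restrictRel q (S.erase y)) :=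
        card_upsets (restrictRel_subset_product _ _)
    _ ≤ dnumProper S q :=
        le_sup (f := fun A => dnum A (restrictRel q A))
          (mem_erase.mpr ⟨(erase_ssubset hy).ne, mem_powerset.mpr (erase_subset y S)⟩)

lemma dnumProper_le (S : Finset α) (q : Finset (α × α)) : dnumProper S q ≤ 2 ^ (#S - 1) := by
  refine Finset.sup_le fun A hA => ?_
  obtain ⟨hne, hAS⟩ := mem_erase.mp hA
  have hA_card : #A ≤ #S - 1 :=
    Nat.le_sub_one_of_lt (card_lt_card (ssubset_of_subset_of_ne (mem_powerset.mp hAS) hne))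
  exact (dnum_le_two_pow_card A _).trans (Nat.pow_le_pow_right two_pos hA_card)

end Downsets

lemma card_piFinset_sub_card_filter_covering_le {ι γ : Type*} [Fintype ι] [DecidableEq ι]
    [DecidableEq γ] (t : Finset (Finset γ)) (Y : Finset γ) :
    #(Fintype.piFinset fun _ : ι => t) -
        #((Fintype.piFinset fun _ : ι => t).filter fun f => ∀ y ∈ Y, ∃ i, y ∈ f i) ≤
      ∑ y ∈ Y, #(t.filter (y ∉ ·)) ^ Fintype.card ι := by
  rw [← card_sdiff_of_subset (filter_subset _ _), ← filter_not]
  calc _ ≤ #(Y.biUnion fun y => Fintype.piFinset fun _ : ι => t.filter (y ∉ ·)) := by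
        refine card_le_card fun f hf => ?_
        simp only [mem_filter, Fintype.mem_piFinset, not_forall, not_exists] at hf
        obtain ⟨hft, y, hy, hyf⟩ := hf
        exact mem_biUnion.mpr ⟨y, hy, Fintype.mem_piFinset.mpr fun i =>
          mem_filter.mpr ⟨hft i, hyf i⟩⟩
    _ ≤ ∑ y ∈ Y, #(Fintype.piFinset fun _ : ι => t.filter (y ∉ ·)) := card_biUnion_le
    _ = ∑ y ∈ Y, #(t.filter (y ∉ ·)) ^ Fintype.card ι := by simp

section Extensions

variable {M K : Finset α} {p Q : Finset (α × α)}

lemma mem_extPOs :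
    Q ∈ extPOs M K p ↔ IsPOon (M ∪ K) Q ∧ restrictRel Q K = p ∧ minset (M ∪ K) Q = M := by
  rw [extPOs, mem_filter, mem_powerset]
  exact ⟨And.right, fun h => ⟨h.1.1, h⟩⟩

def upperTrace (K : Finset α) (Q : Finset (α × α)) (a : α) : Finset α :=
  K.filter fun y => (a, y) ∈ Q

def ofUpperTraces (M : Finset α) (p : Finset (α × α)) (f : M → Finset α) : Finset (α × α) :=
  p ∪ univ.biUnion fun a : M => insert (a.1, a.1) ((f a).image fun y => (a.1, y))

lemma mem_ofUpperTraces {f : M → Finset α} {x y : α} :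
    (x, y) ∈ ofUpperTraces M p f ↔ (x, y) ∈ p ∨ ∃ hx : x ∈ M, y = x ∨ y ∈ f ⟨x, hx⟩ := by
  simp only [ofUpperTraces, mem_union, mem_biUnion, mem_univ, true_and, mem_insert, mem_image,
    Prod.mk.injEq, Subtype.exists]
  aesop

lemma mem_ofUpperTraces_of_notMem {f : M → Finset α} {x y : α} (hx : x ∉ M) :
    (x, y) ∈ ofUpperTraces M p f ↔ (x, y) ∈ p := by
  simp [mem_ofUpperTraces, hx]

section OfUpperTraces

variable (hMK : Disjoint M K) (hpK : p ⊆ K ×ˢ K) {f : M → Finset α} (hfK : ∀ a, f a ⊆ K)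
include hMK hpK

lemma isPOon_ofUpperTraces (hp : IsPOon K p) (hf : ∀ a, f a ∈ upsets K p) :
    IsPOon (M ∪ K) (ofUpperTraces M p f) := by
  have hfK a : f a ⊆ K := (mem_upsets.mp (hf a)).1
  have hnotM {x} (hx : x ∈ K) : x ∉ M := disjoint_right.mp hMK hx
  refine ⟨fun ⟨x, y⟩ hxy => ?_, fun x hx => ?_, fun x y z hxy hyz => ?_, fun x y hxy hyx => ?_⟩
  · rw [mem_product, mem_union, mem_union]
    rcases mem_ofUpperTraces.mp hxy with hxy | ⟨hx, rfl | hy⟩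
    · exact ⟨.inr (mem_product.mp (hpK hxy)).1, .inr (mem_product.mp (hpK hxy)).2⟩
    · exact ⟨.inl hx, .inl hx⟩
    · exact ⟨.inl hx, .inr (hfK _ hy)⟩
  · rcases mem_union.mp hx with hx | hx
    · exact mem_ofUpperTraces.mpr (.inr ⟨hx, .inl rfl⟩)
    · exact mem_ofUpperTraces.mpr (.inl (hp.2.1 x hx))
  · rcases mem_ofUpperTraces.mp hxy with hxy | ⟨hx, rfl | hy⟩
    · have hyz := (mem_ofUpperTraces_of_notMem (hnotM (mem_product.mp (hpK hxy)).2)).mp hyz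
      exact mem_ofUpperTraces.mpr (.inl (hp.2.2.1 x y z hxy hyz))
    · exact hyz
    · have hyz := (mem_ofUpperTraces_of_notMem (hnotM (hfK _ hy))).mp hyz
      exact mem_ofUpperTraces.mpr (.inr ⟨hx, .inr ((mem_upsets.mp (hf _)).2 y hy z hyz)⟩)
  · rcases mem_ofUpperTraces.mp hxy with hxy | ⟨hx, rfl | hy⟩
    · have hyx := (mem_ofUpperTraces_of_notMem (hnotM (mem_product.mp (hpK hxy)).2)).mp hyx
      exact hp.2.2.2 x y hxy hyx
    · rfl
    · have hyx := (mem_ofUpperTraces_of_notMem (hnotM (hfK _ hy))).mp hyx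
      exact absurd hx (hnotM (mem_product.mp (hpK hyx)).2)

lemma restrictRel_ofUpperTraces : restrictRel (ofUpperTraces M p f) K = p := by
  ext ⟨x, y⟩
  rw [restrictRel, mem_filter]
  refine ⟨fun ⟨hxy, hx, _⟩ => ?_, fun hxy => ?_⟩
  · exact (mem_ofUpperTraces_of_notMem (disjoint_right.mp hMK hx)).mp hxy
  · exact ⟨mem_ofUpperTraces.mpr (.inl hxy), mem_product.mp (hpK hxy)⟩

include hfK

lemma minset_ofUpperTraces (hcov : ∀ y ∈ minset K p, ∃ a, y ∈ f a) :
    minset (M ∪ K) (ofUpperTraces M p f) = M := by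
  ext x
  rw [mem_minset]
  refine ⟨fun ⟨hx, hxmin⟩ => ?_, fun hx => ⟨mem_union_left _ hx, fun y hyx => ?_⟩⟩
  · rcases mem_union.mp hx with hx | hx
    · exact hx
    · obtain ⟨a, hxa⟩ := hcov x (mem_minset.mpr
        ⟨hx, fun y hyx => hxmin y (mem_ofUpperTraces.mpr (.inl hyx))⟩)
      rw [← hxmin a (mem_ofUpperTraces.mpr (.inr ⟨a.2, .inr hxa⟩))]
      exact a.2
  · have hxK : x ∉ K := disjoint_left.mp hMK hx
    rcases mem_ofUpperTraces.mp hyx with hyx | ⟨_, rfl | hxy⟩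
    · exact absurd (mem_product.mp (hpK hyx)).2 hxK
    · rfl
    · exact absurd (hfK _ hxy) hxK

lemma upperTrace_ofUpperTraces (a : M) : upperTrace K (ofUpperTraces M p f) a = f a := by
  have haK : a.1 ∉ K := disjoint_left.mp hMK a.2
  ext y
  rw [upperTrace, mem_filter, mem_ofUpperTraces]
  refine ⟨fun ⟨hy, hay⟩ => ?_, fun hy => ⟨hfK a hy, .inr ⟨a.2, .inr hy⟩⟩⟩
  rcases hay with hay | ⟨_, rfl | hy⟩
  · exact absurd (mem_product.mp (hpK hay)).1 haK
  · exact absurd hy haK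
  · exact hy

end OfUpperTraces

lemma upperTrace_mem_upsets (hQ : Q ∈ extPOs M K p) (a : α) : upperTrace K Q a ∈ upsets K p := by
  obtain ⟨hPO, hres, -⟩ := mem_extPOs.mp hQ
  refine mem_upsets.mpr ⟨filter_subset _ _, fun x hx y hxy => ?_⟩
  rw [← hres, restrictRel, mem_filter] at hxy
  exact mem_filter.mpr ⟨hxy.2.2, hPO.2.2.1 a x y (mem_filter.mp hx).2 hxy.1⟩

lemma exists_mem_upperTrace (hMK : Disjoint M K) (hQ : Q ∈ extPOs M K p) {y : α}
    (hy : y ∈ minset K p) : ∃ a : M, y ∈ upperTrace K Q a := by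
  obtain ⟨hPO, hres, hmin⟩ := mem_extPOs.mp hQ
  obtain ⟨hyK, hymin⟩ := mem_minset.mp hy
  have hy_not_min : y ∉ minset (M ∪ K) Q := by
    rw [hmin]
    exact disjoint_right.mp hMK hyK
  simp only [mem_minset, mem_union, hyK, or_true, true_and, not_forall] at hy_not_min
  obtain ⟨x, hxy, hne⟩ := hy_not_min
  rcases mem_union.mp (mem_product.mp (hPO.1 hxy)).1 with hx | hx
  · exact ⟨⟨x, hx⟩, mem_filter.mpr ⟨hyK, hxy⟩⟩
  · refine absurd (hymin x ?_) hne
    rw [← hres]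
    exact mem_filter.mpr ⟨hxy, hx, hyK⟩

lemma ofUpperTraces_upperTrace (hQ : Q ∈ extPOs M K p) :
    ofUpperTraces M p (fun a => upperTrace K Q a) = Q := by
  obtain ⟨hPO, hres, hmin⟩ := mem_extPOs.mp hQ
  ext ⟨x, y⟩
  rw [mem_ofUpperTraces]
  refine ⟨fun h => ?_, fun hxy => ?_⟩
  · rcases h with hxy | ⟨hx, rfl | hy⟩
    · exact (mem_filter.mp (hres ▸ hxy)).1
    · exact hPO.2.1 _ (mem_union_left _ hx)
    · exact (mem_filter.mp hy).2
  obtain ⟨hx, hy⟩ := mem_product.mp (hPO.1 hxy)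
  by_cases hyM : y ∈ M
  · obtain rfl : x = y := (mem_minset.mp (by rwa [hmin] : y ∈ minset (M ∪ K) Q)).2 x hxy
    exact .inr ⟨hyM, .inl rfl⟩
  have hyK : y ∈ K := (mem_union.mp hy).resolve_left hyM
  rcases mem_union.mp hx with hx | hx
  · exact .inr ⟨hx, .inr (mem_filter.mpr ⟨hyK, hxy⟩)⟩
  · exact .inl (hres ▸ mem_filter.mpr ⟨hxy, hx, hyK⟩)

theorem card_extPOs (hMK : Disjoint M K) (hp : IsPOon K p) :
    #(extPOs M K p) = #((Fintype.piFinset fun _ : M => upsets K p).filter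
      fun f => ∀ y ∈ minset K p, ∃ a, y ∈ f a) := by
  have hfK {f : M → Finset α} (hf : f ∈ Fintype.piFinset fun _ : M => upsets K p) (a : M) :
      f a ⊆ K :=
    (mem_upsets.mp (Fintype.mem_piFinset.mp hf a)).1
  refine card_nbij' (fun Q a => upperTrace K Q a) (ofUpperTraces M p) (fun Q hQ => ?_)
    (fun f hf => ?_) (fun Q hQ => ofUpperTraces_upperTrace hQ) (fun f hf => ?_)
  · exact mem_filter.mpr ⟨Fintype.mem_piFinset.mpr fun a => upperTrace_mem_upsets hQ a,
      fun y hy => exists_mem_upperTrace hMK hQ hy⟩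
  · obtain ⟨hf, hcov⟩ := mem_filter.mp hf
    exact mem_extPOs.mpr ⟨isPOon_ofUpperTraces hMK hp.1 hp (Fintype.mem_piFinset.mp hf),
      restrictRel_ofUpperTraces hMK hp.1, minset_ofUpperTraces hMK hp.1 (hfK hf) hcov⟩
  · exact funext (upperTrace_ofUpperTraces hMK hp.1 (hfK (mem_filter.mp hf).1))

lemma card_piFinset_upsets (M : Finset α) (hpK : p ⊆ K ×ˢ K) :
    #(Fintype.piFinset fun _ : M => upsets K p) = dnum K p ^ #M := by
  rw [Fintype.card_piFinset, prod_const, card_upsets hpK, card_univ, Fintype.card_coe]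

lemma card_extPOs_le (hMK : Disjoint M K) (hp : IsPOon K p) :
    #(extPOs M K p) ≤ dnum K p ^ #M := by
  rw [← card_piFinset_upsets M hp.1, card_extPOs hMK hp]
  exact card_filter_le _ _

lemma dnum_pow_sub_card_extPOs_le (hMK : Disjoint M K) (hp : IsPOon K p) :
    dnum K p ^ #M - #(extPOs M K p) ≤ #(minset K p) * dnumProper K p ^ #M := by
  rw [← card_piFinset_upsets M hp.1, card_extPOs hMK hp, ← smul_eq_mul, ← sum_const]
  refine (card_piFinset_sub_card_filter_covering_le _ _).trans (sum_le_sum fun y hy => ?_)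
  rw [Fintype.card_coe]
  exact Nat.pow_le_pow_left (card_filter_not_mem_upsets_le (mem_minset.mp hy).1) _

end Extensions

theorem stmt_17_general (M K : Finset α) (hMK : Disjoint M K)
    (p : Finset (α × α)) (hp : IsPOon K p) :
    ((extPOs M K p).card ≤ (dnum K p) ^ M.card) ∧
    ((dnum K p) ^ M.card - (extPOs M K p).card ≤
      2 ^ ((minset K p).card - 1) *
        ((K.powerset.erase K).sup fun A => dnum A (restrictRel p A)) ^ M.card) ∧
    (((K.powerset.erase K).sup fun A => dnum A (restrictRel p A)) ≤
      2 ^ (K.card - 1)) ∧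
    ((dnum K p) ^ M.card - (extPOs M K p).card ≤
      2 ^ ((K.card - 1) * (M.card + 1))) := by
  have hgap : dnum K p ^ #M - #(extPOs M K p) ≤ 2 ^ (#(minset K p) - 1) * dnumProper K p ^ #M :=
    (dnum_pow_sub_card_extPOs_le hMK hp).trans (Nat.mul_le_mul_right _ (Nat.le_two_pow_sub_one _))
  refine ⟨card_extPOs_le hMK hp, hgap, dnumProper_le K p, hgap.trans ?_⟩
  calc 2 ^ (#(minset K p) - 1) * dnumProper K p ^ #M
      ≤ 2 ^ (#K - 1) * (2 ^ (#K - 1)) ^ #M :=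
        Nat.mul_le_mul (Nat.pow_le_pow_right two_pos (Nat.sub_le_sub_right
          (card_le_card (filter_subset _ _)) 1)) (Nat.pow_le_pow_left (dnumProper_le K p) _)
    _ = 2 ^ ((#K - 1) * (#M + 1)) := by rw [← pow_mul, ← pow_add]; ring_nf

/-- Theorem 6.2: with `d'(P) = max{d(P|_A) : A ⊊ K}` and `m(P)` the number of
minimal points, `0 ≤ d(P)^m − e(m,P) ≤ 2^{m(P)−1} d'(P)^m`; moreover
`d'(P) ≤ 2^{k−1}` and `d(P)^m − e(m,P) ≤ 2^{(k−1)(m+1)}`. -/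
theorem stmt_17 (M K : Finset α) (hMK : Disjoint M K) (hK : K.Nonempty)
    (p : Finset (α × α)) (hp : IsPOon K p) :
    ((extPOs M K p).card ≤ (dnum K p) ^ M.card) ∧
    ((dnum K p) ^ M.card - (extPOs M K p).card ≤
      2 ^ ((minset K p).card - 1) *
        ((K.powerset.erase K).sup fun A => dnum A (restrictRel p A)) ^ M.card) ∧
    (((K.powerset.erase K).sup fun A => dnum A (restrictRel p A)) ≤
      2 ^ (K.card - 1)) ∧
    ((dnum K p) ^ M.card - (extPOs M K p).card ≤
      2 ^ ((K.card - 1) * (M.card + 1))) :=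
  stmt_17_general M K hMK p hp
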